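/- In the Jacobson algebra A = ⟨x, y | xy = 1⟩ over a field F, the set {y^i x^j : i, j ≥ 0} is linearly independent over F. -/
import Mathlib

noncomputable section JacAux

variable (F : Type*) [Field F]

/-- shift down operator: `e_{k+1} ↦ e_k`, `e_0 ↦ 0`. -/
def jacD : (ℕ →₀ F) →ₗ[F] (ℕ →₀ F) :=
  Finsupp.lsum F fun n => match n with
    | 0 => 0
    | k+1 => Finsupp.lsingle k

/-- shift up operator: `e_k ↦ e_{k+1}`. -/
def jacU : (ℕ →₀ F) →ₗ[F] (ℕ →₀ F) :=
  Finsupp.lmapDomain F F (· + 1)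

variable {F}

lemma jacD_single_succ (k : ℕ) (a : F) :
    jacD F (Finsupp.single (k+1) a) = Finsupp.single k a := by
  simp [jacD]

lemma jacD_single_zero (a : F) : jacD F (Finsupp.single 0 a) = 0 := by
  simp [jacD]

lemma jacU_single (k : ℕ) (a : F) :
    jacU F (Finsupp.single k a) = Finsupp.single (k+1) a := by
  simp [jacU, Finsupp.lmapDomain, Finsupp.mapDomain_single]

lemma jacD_mul_jacU : jacD F * jacU F = 1 := by
  apply Finsupp.lhom_ext
  intro n a
  simp [Module.End.mul_apply, jacU_single, jacD_single_succ]

lemma jacU_pow (i k : ℕ) (a : F) :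
    ((jacU F) ^ i) (Finsupp.single k a) = Finsupp.single (k + i) a := by
  induction i with
  | zero => simp
  | succ i ih =>
    rw [pow_succ', Module.End.mul_apply, ih, jacU_single, Nat.add_assoc]

lemma jacD_pow_le (j n : ℕ) (a : F) (h : j ≤ n) :
    ((jacD F) ^ j) (Finsupp.single n a) = Finsupp.single (n - j) a := by
  induction j generalizing n with
  | zero => simp
  | succ j ih =>
    obtain ⟨m, rfl⟩ : ∃ m, n = m + 1 := ⟨n - 1, by omega⟩
    rw [pow_succ, Module.End.mul_apply, jacD_single_succ, ih m (by omega)]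
    congr 1
    omega

lemma jacD_pow_gt (j n : ℕ) (a : F) (h : n < j) :
    ((jacD F) ^ j) (Finsupp.single n a) = 0 := by
  induction j generalizing n with
  | zero => omega
  | succ j ih =>
    rw [pow_succ, Module.End.mul_apply]
    cases n with
    | zero => rw [jacD_single_zero]; simp
    | succ m => rw [jacD_single_succ]; exact ih m (by omega)

end JacAux

/-- The defining relation of the Jacobson algebra `⟨x, y | xy = 1⟩`. -/
inductive JacobsonRel (F : Type*) [Field F] :
    FreeAlgebra F (Fin 2) → FreeAlgebra F (Fin 2) → Prop
  | rel : JacobsonRel F (FreeAlgebra.ι F 0 * FreeAlgebra.ι F 1) 1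

/-- The Jacobson algebra `A = ⟨x, y | xy = 1⟩` over `F`. -/
abbrev Jacobson (F : Type*) [Field F] := RingQuot (JacobsonRel F)

noncomputable def jx (F : Type*) [Field F] : Jacobson F :=
  RingQuot.mkRingHom (JacobsonRel F) (FreeAlgebra.ι F 0)

noncomputable def jy (F : Type*) [Field F] : Jacobson F :=
  RingQuot.mkRingHom (JacobsonRel F) (FreeAlgebra.ι F 1)

noncomputable def jacRep (F : Type*) [Field F] :
    Jacobson F →ₐ[F] Module.End F (ℕ →₀ F) :=
  RingQuot.liftAlgHom F ⟨FreeAlgebra.lift F (fun i => if i = 0 then jacD F else jacU F),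
    by
      rintro a b ⟨⟩
      simp [map_mul, FreeAlgebra.lift_ι_apply, jacD_mul_jacU]⟩

lemma jacRep_jx (F : Type*) [Field F] : jacRep F (jx F) = jacD F := by
  have : jx F = RingQuot.mkAlgHom F (JacobsonRel F) (FreeAlgebra.ι F 0) :=
    (RingHom.congr_fun (RingQuot.mkAlgHom_coe F (JacobsonRel F)) _).symm
  rw [this, jacRep, RingQuot.liftAlgHom_mkAlgHom_apply]
  simp [FreeAlgebra.lift_ι_apply]

lemma jacRep_jy (F : Type*) [Field F] : jacRep F (jy F) = jacU F := by
  have : jy F = RingQuot.mkAlgHom F (JacobsonRel F) (FreeAlgebra.ι F 1) :=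
    (RingHom.congr_fun (RingQuot.mkAlgHom_coe F (JacobsonRel F)) _).symm
  rw [this, jacRep, RingQuot.liftAlgHom_mkAlgHom_apply]
  simp [FreeAlgebra.lift_ι_apply]

/-- The set `{ y^i x^j : i, j ≥ 0 }` is linearly independent over `F`
in the Jacobson algebra. -/
theorem jacobson_linearIndependent (F : Type*) [Field F] :
    LinearIndependent F (fun p : ℕ × ℕ => jy F ^ p.1 * jx F ^ p.2) := by
  rw [linearIndependent_iff]
  intro l hl
  have hrep : ∑ p ∈ l.support, l p • ((jacU F) ^ p.1 * (jacD F) ^ p.2) = 0 := by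
    have := congrArg (jacRep F) hl
    rw [map_zero] at this
    rw [← this, Finsupp.linearCombination_apply, Finsupp.sum, map_sum]
    refine Finset.sum_congr rfl fun p _ => ?_
    rw [map_smul, map_mul, map_pow, map_pow, jacRep_jx, jacRep_jy]
  have key : ∀ j i, l (i, j) = 0 := by
    intro j
    induction j using Nat.strong_induction_on with
    | _ j IH =>
      intro i
      have h1 : (∑ p ∈ l.support,
          l p • (((jacU F) ^ p.1) (((jacD F) ^ p.2) (Finsupp.single j (1:F))))) i = 0 := by
        have := congrArg (fun T : Module.End F (ℕ →₀ F) => (T (Finsupp.single j (1:F))) i) hrep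
        simpa [LinearMap.sum_apply, Module.End.mul_apply] using this
      rw [Finsupp.finset_sum_apply] at h1
      have heq : ∀ p ∈ l.support, p ≠ (i, j) →
          (l p • (((jacU F) ^ p.1) (((jacD F) ^ p.2) (Finsupp.single j (1:F))))) i = 0 := by
        rintro ⟨a, b⟩ _ hne
        rcases lt_trichotomy b j with hb | rfl | hb
        · rw [IH b hb a]; simp
        · have ha : a ≠ i := fun h => hne (by rw [h])
          rw [jacD_pow_le b b 1 le_rfl, Nat.sub_self, jacU_pow]
          simp [Finsupp.single_apply, ha]
        · rw [jacD_pow_gt b j 1 hb]; simp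
      have hmain : (l (i, j) • (((jacU F) ^ i) (((jacD F) ^ j) (Finsupp.single j (1:F))))) i
          = l (i, j) := by
        rw [jacD_pow_le j j 1 le_rfl, Nat.sub_self, jacU_pow]
        simp [Finsupp.single_apply]
      rw [Finset.sum_eq_single (i, j) heq (fun h => by
        rw [Finsupp.notMem_support_iff.mp h]; simp)] at h1
      rw [hmain] at h1
      exact h1
  ext p
  exact key p.2 p.1
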